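/- Let A be a commutative ℂ-algebra, τ : A → A ℂ-linear and κ : A × A → A symmetric ℂ-bilinear with τ(φψ) = τ(φ)ψ + 2κ(φ,ψ) + φτ(ψ) and κ(φψ, χ) = φκ(ψ,χ) + ψκ(φ,χ). Suppose φ₁, …, φ_n ∈ A and λ, μ ∈ ℂ satisfy τ(φᵢ) = λφᵢ and κ(φᵢ, φⱼ) = μφᵢφⱼ for all i, j. Then for any monomial M = φ₁^{d₁}⋯φ_n^{d_n} of total degree d = d₁ + ⋯ + d_n, one has τ(M) = (dλ + d(d−1)μ)·M, and for any two such monomials M, N of degree d, κ(M, N) = d²μ·M·N. -/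

import Mathlib

/-! Write a monomial of degree `d` as a product of `d` members of the family and add one factor
at a time. The Leibniz rule for `κ` shows that each factor contributes `μ` to the eigenvalue of
`κ(M, φⱼ)`, hence `κ(M, N) = (deg M)(deg N) μ M N`. The Leibniz rule for `τ` then gives
`τ(M φₐ) = (τ-eigenvalue of M + λ + 2 (deg M) μ) M φₐ`, and `Σ_{k<d} (λ + 2kμ) = dλ + d(d-1)μ`. -/

section

variable {R A ι : Type*} [CommRing R] [CommRing A] [Algebra R A]

theorem kappa_one_left {κ : A → A → A}
    (hκ : ∀ x y z : A, κ (x * y) z = x * κ y z + y * κ x z) (z : A) : κ 1 z = 0 := by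
  simpa using hκ 1 1 z

theorem tau_one {τ : A → A} {κ : A → A → A}
    (hτ : ∀ x y : A, τ (x * y) = τ x * y + 2 * κ x y + x * τ y)
    (hκ : ∀ x y z : A, κ (x * y) z = x * κ y z + y * κ x z) : τ 1 = 0 := by
  simpa [kappa_one_left hκ] using hτ 1 1

theorem kappa_prod_map_left {κ : A → A → A}
    (hκ : ∀ x y z : A, κ (x * y) z = x * κ y z + y * κ x z)
    {φ : ι → A} {mu : R} (h2 : ∀ i j, κ (φ i) (φ j) = mu • (φ i * φ j))
    (s : Multiset ι) (j : ι) :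
    κ (s.map φ).prod (φ j) = ((Multiset.card s : R) * mu) • ((s.map φ).prod * φ j) := by
  induction s using Multiset.induction with
  | empty => simp [kappa_one_left hκ]
  | cons a s ih =>
    simp only [Multiset.map_cons, Multiset.prod_cons, hκ, ih, h2, Multiset.card_cons,
      Nat.cast_succ, Algebra.smul_def, map_add, map_mul, map_one]
    ring

theorem kappa_prod_map {κ : A → A → A} (hsymm : ∀ x y : A, κ x y = κ y x)
    (hκ : ∀ x y z : A, κ (x * y) z = x * κ y z + y * κ x z)
    {φ : ι → A} {mu : R} (h2 : ∀ i j, κ (φ i) (φ j) = mu • (φ i * φ j))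
    (s t : Multiset ι) :
    κ (s.map φ).prod (t.map φ).prod
      = ((Multiset.card s : R) * Multiset.card t * mu) • ((s.map φ).prod * (t.map φ).prod) := by
  induction t using Multiset.induction with
  | empty => simp [hsymm _ 1, kappa_one_left hκ]
  | cons a t ih =>
    rw [Multiset.map_cons, Multiset.prod_cons, hsymm, hκ, hsymm _ (s.map φ).prod, ih,
      hsymm, kappa_prod_map_left hκ h2]
    simp only [Multiset.card_cons, Nat.cast_succ, Algebra.smul_def, map_add, map_mul, map_one]
    ring

theorem tau_prod_map {τ : A → A} {κ : A → A → A}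
    (hτ : ∀ x y : A, τ (x * y) = τ x * y + 2 * κ x y + x * τ y)
    (hκ : ∀ x y z : A, κ (x * y) z = x * κ y z + y * κ x z)
    {φ : ι → A} {lam mu : R} (h1 : ∀ i, τ (φ i) = lam • φ i)
    (h2 : ∀ i j, κ (φ i) (φ j) = mu • (φ i * φ j)) (s : Multiset ι) :
    τ (s.map φ).prod
      = ((Multiset.card s : R) * lam + Multiset.card s * (Multiset.card s - 1) * mu)
        • (s.map φ).prod := by
  induction s using Multiset.induction with
  | empty => simp [tau_one hτ hκ]
  | cons a s ih =>
    rw [Multiset.map_cons, Multiset.prod_cons, mul_comm, hτ, ih, h1, kappa_prod_map_left hκ h2]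
    simp only [Multiset.card_cons, Nat.cast_succ, Algebra.smul_def, map_add, map_sub, map_mul,
      map_one]
    ring

theorem prod_pow_eq_prod_map_sum_replicate [Fintype ι] (φ : ι → A) (d : ι → ℕ) :
    ∏ i, φ i ^ d i = ((∑ i, Multiset.replicate (d i) i).map φ).prod := by
  rw [← Multiset.coe_mapAddMonoidHom, map_sum, Multiset.prod_sum]
  simp

end

/-- monomials of total degree `d` in an eigenfamily with
eigenvalues `(λ, μ)` form an eigenfamily with eigenvalues `(dλ + d(d−1)μ, d²μ)`. -/
theorem eigen_monomials (A : Type*) [CommRing A] [Algebra ℂ A]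
    (τ : A →ₗ[ℂ] A) (κ : A →ₗ[ℂ] A →ₗ[ℂ] A)
    (hsymm : ∀ x y : A, κ x y = κ y x)
    (hτ : ∀ x y : A, τ (x * y) = τ x * y + 2 * κ x y + x * τ y)
    (hκ : ∀ x y z : A, κ (x * y) z = x * κ y z + y * κ x z)
    (n : ℕ) (φ : Fin n → A) (lam mu : ℂ)
    (h1 : ∀ i, τ (φ i) = lam • φ i)
    (h2 : ∀ i j, κ (φ i) (φ j) = mu • (φ i * φ j))
    (dm em : Fin n → ℕ) (d : ℕ)
    (hdm : ∑ i, dm i = d) (hem : ∑ i, em i = d) :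
    τ (∏ i, φ i ^ dm i)
        = ((d : ℂ) * lam + (d : ℂ) * ((d : ℂ) - 1) * mu) • (∏ i, φ i ^ dm i) ∧
    κ (∏ i, φ i ^ dm i) (∏ i, φ i ^ em i)
        = ((d : ℂ) ^ 2 * mu) • ((∏ i, φ i ^ dm i) * ∏ i, φ i ^ em i) := by
  have card_eq (e : Fin n → ℕ) : Multiset.card (∑ i, Multiset.replicate (e i) i) = ∑ i, e i := by
    simp [Multiset.card_sum]
  simp only [prod_pow_eq_prod_map_sum_replicate φ]
  refine ⟨?_, ?_⟩
  · rw [tau_prod_map hτ hκ h1 h2, card_eq, hdm]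
  · rw [kappa_prod_map hsymm hκ h2, card_eq, card_eq, hdm, hem, sq]
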